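/- Let (A,B) be a Pythagorean pair on a finite-dimensional Hilbert space 𝔥. If ξ ∈ 𝔥 satisfies lim_n ‖p_nξ‖ = c > 0 for some ray p and all the vectors p_nξ (n ∈ ℕ) are orthogonal to every vector contained in any ray, then we reach a contradiction; i.e. no such ξ exists. Equivalently, in finite dimensions the subspace 𝔚 of vectors partially contained in rays is trivial. -/

import Mathlib

open Filter Topology

noncomputable def pythWord {H : Type*} [NormedAddCommGroup H] [InnerProductSpace ℂ H]
    (A B : H →L[ℂ] H) (w : List Bool) : H →L[ℂ] H :=
  (w.map (fun x => if x then B else A)).prod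

/-- The operator `p_n` given by composing the operators of the first `n` letters of the
ray `p` (first letter applied first). `false` stands for `a ↦ A`, `true` for `b ↦ B`. -/
noncomputable def rayOp {H : Type*} [NormedAddCommGroup H] [InnerProductSpace ℂ H]
    (A B : H →L[ℂ] H) (p : ℕ → Bool) (n : ℕ) : H →L[ℂ] H :=
  pythWord A B ((List.range n).reverse.map p)

/-! The vectors `p_n ξ` stay in the closed ball of radius `‖ξ‖`, so by compactness a
subsequence `p_{φ n} ξ` converges to some `η` with `‖η‖ = c`. Passing to a further subsequence,
the shifted rays `k ↦ p (φ n + k)` converge letterwise (the Cantor space `ℕ → Bool` is compact)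
to a ray `q`. Then `q_m η` is the limit of `p_{φ n + m} ξ`, so `‖q_m η‖ = c = ‖η‖`: the vector
`η` is contained in the ray `q`. Hence every `p_{φ n} ξ` is orthogonal to `η`, and in the limit
`η ⟂ η`, which forces `c = ‖η‖ = 0`. -/

def ContainedInRay {H : Type*} [NormedAddCommGroup H] [InnerProductSpace ℂ H]
    (A B : H →L[ℂ] H) (q : ℕ → Bool) (η : H) : Prop :=
  ∀ m, ‖rayOp A B q m η‖ = ‖η‖

section RayOp

variable {H : Type*} [NormedAddCommGroup H] [InnerProductSpace ℂ H] (A B : H →L[ℂ] H)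

theorem pythWord_append (l₁ l₂ : List Bool) :
    pythWord A B (l₁ ++ l₂) = pythWord A B l₁ * pythWord A B l₂ := by
  simp [pythWord]

theorem rayOp_zero (p : ℕ → Bool) : rayOp A B p 0 = 1 := rfl

theorem rayOp_succ (p : ℕ → Bool) (n : ℕ) :
    rayOp A B p (n + 1) = (if p n then B else A) * rayOp A B p n := by
  simp [rayOp, List.range_succ, pythWord]

theorem rayOp_add (p : ℕ → Bool) (s m : ℕ) :
    rayOp A B p (s + m) = rayOp A B (fun k => p (s + k)) m * rayOp A B p s := by
  simp [rayOp, List.range_add, pythWord_append, Function.comp_def]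

theorem rayOp_congr {p q : ℕ → Bool} {n : ℕ} (h : ∀ k < n, p k = q k) :
    rayOp A B p n = rayOp A B q n := by
  unfold rayOp
  congr 1
  exact List.map_congr_left fun k hk => h k (List.mem_range.mp (List.mem_reverse.mp hk))

theorem eventually_rayOp_eq_of_tendsto {ι : Type*} {l : Filter ι} {σ : ι → ℕ → Bool}
    {q : ℕ → Bool} (hσ : Tendsto σ l (𝓝 q)) (m : ℕ) :
    ∀ᶠ i in l, rayOp A B (σ i) m = rayOp A B q m := by
  have hletter : ∀ k, ∀ᶠ i in l, σ i k = q k := fun k => by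
    simpa [nhds_discrete, tendsto_pure] using tendsto_pi_nhds.mp hσ k
  filter_upwards [(Finset.range m).eventually_all.mpr fun k _ => hletter k] with i hi
  exact rayOp_congr A B fun k hk => hi k (Finset.mem_range.mpr hk)

theorem norm_sq_add_norm_sq_of_pythagorean [CompleteSpace H]
    (hpyth : (ContinuousLinearMap.adjoint A).comp A
      + (ContinuousLinearMap.adjoint B).comp B = 1) (x : H) :
    ‖A x‖ ^ 2 + ‖B x‖ ^ 2 = ‖x‖ ^ 2 := by
  have h := congrArg (fun T : H →L[ℂ] H => (inner ℂ (T x) x : ℂ)) hpyth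
  simp only [add_apply, ContinuousLinearMap.comp_apply,
    one_apply_eq_self, inner_add_left, ContinuousLinearMap.adjoint_inner_left,
    inner_self_eq_norm_sq_to_K] at h
  exact_mod_cast h

theorem norm_rayOp_apply_le [CompleteSpace H]
    (hpyth : (ContinuousLinearMap.adjoint A).comp A
      + (ContinuousLinearMap.adjoint B).comp B = 1) (p : ℕ → Bool) (n : ℕ) (x : H) :
    ‖rayOp A B p n x‖ ≤ ‖x‖ := by
  have hsq (y : H) := norm_sq_add_norm_sq_of_pythagorean A B hpyth y
  have hA (y : H) : ‖A y‖ ≤ ‖y‖ :=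
    le_of_sq_le_sq (by nlinarith [hsq y, sq_nonneg ‖B y‖]) (norm_nonneg y)
  have hB (y : H) : ‖B y‖ ≤ ‖y‖ :=
    le_of_sq_le_sq (by nlinarith [hsq y, sq_nonneg ‖A y‖]) (norm_nonneg y)
  induction n with
  | zero => simp [rayOp_zero]
  | succ n ih =>
    rw [rayOp_succ, mul_apply_eq_comp]
    split
    · exact (hB _).trans ih
    · exact (hA _).trans ih

theorem exists_containedInRay_of_tendsto_subseq {p : ℕ → Bool} {ξ η : H} {c : ℝ}
    {φ : ℕ → ℕ} (hlim : Tendsto (fun n => ‖rayOp A B p n ξ‖) atTop (𝓝 c))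
    (hφ : Tendsto φ atTop atTop) (hη : Tendsto (fun n => rayOp A B p (φ n) ξ) atTop (𝓝 η)) :
    ∃ q, ContainedInRay A B q η := by
  obtain ⟨q, ψ, hψ, hq⟩ := CompactSpace.tendsto_subseq fun n k => p (φ n + k)
  have hφψ : Tendsto (φ ∘ ψ) atTop atTop := hφ.comp hψ.tendsto_atTop
  have hnorm (m : ℕ) : ‖rayOp A B q m η‖ = c := by
    have hshift : ∀ᶠ n in atTop,
        rayOp A B q m (rayOp A B p (φ (ψ n)) ξ) = rayOp A B p (φ (ψ n) + m) ξ := by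
      filter_upwards [eventually_rayOp_eq_of_tendsto A B hq m] with n hn
      rw [rayOp_add, ← hn]
      rfl
    have hqη : Tendsto (fun n => rayOp A B q m (rayOp A B p (φ (ψ n)) ξ)) atTop
        (𝓝 (rayOp A B q m η)) :=
      ((rayOp A B q m).continuous.tendsto η).comp (hη.comp hψ.tendsto_atTop)
    refine tendsto_nhds_unique ?_ (hlim.comp ((tendsto_add_atTop_nat m).comp hφψ))
    exact (hqη.congr' hshift).norm
  have hη_norm : ‖η‖ = c := by simpa [rayOp_zero] using hnorm 0
  exact ⟨q, fun m => (hnorm m).trans hη_norm.symm⟩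

end RayOp

theorem eq_zero_of_tendsto_of_inner_eq_zero {𝕜 E ι : Type*} [RCLike 𝕜] [NormedAddCommGroup E]
    [InnerProductSpace 𝕜 E] {l : Filter ι} [l.NeBot] {x : ι → E} {η : E}
    (hx : Tendsto x l (𝓝 η)) (horth : ∀ i, inner 𝕜 (x i) η = 0) : η = 0 := by
  have hlim : Tendsto (fun i => inner 𝕜 (x i) η) l (𝓝 (inner 𝕜 η η)) :=
    hx.inner tendsto_const_nhds
  simp only [horth] at hlim
  exact inner_self_eq_zero.mp (tendsto_nhds_unique hlim tendsto_const_nhds)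

theorem pythagorean_pair_no_partially_contained_finite_dim
    {H : Type*} [NormedAddCommGroup H] [InnerProductSpace ℂ H]
    [FiniteDimensional ℂ H]
    (A B : H →L[ℂ] H)
    (hpyth : (ContinuousLinearMap.adjoint A).comp A
      + (ContinuousLinearMap.adjoint B).comp B = 1) :
    ¬ ∃ (ξ : H) (c : ℝ) (p : ℕ → Bool), 0 < c ∧
        Tendsto (fun n => ‖rayOp A B p n ξ‖) atTop (nhds c) ∧
        ∀ (n : ℕ) (η : H), (∃ q : ℕ → Bool, ∀ m, ‖rayOp A B q m η‖ = ‖η‖) →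
          (inner ℂ (rayOp A B p n ξ) η : ℂ) = 0 := by
  rintro ⟨ξ, c, p, hc, hlim, horth⟩
  obtain ⟨η, -, φ, hφ, hη⟩ := (isCompact_closedBall (0 : H) ‖ξ‖).tendsto_subseq
    (x := fun n => rayOp A B p n ξ)
    fun n => mem_closedBall_zero_iff.mpr (norm_rayOp_apply_le A B hpyth p n ξ)
  obtain ⟨q, hq⟩ := exists_containedInRay_of_tendsto_subseq A B hlim hφ.tendsto_atTop hη
  have hη0 : η = 0 := eq_zero_of_tendsto_of_inner_eq_zero hη fun n => horth (φ n) η ⟨q, hq⟩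
  have hlim0 : Tendsto (fun n => ‖rayOp A B p (φ n) ξ‖) atTop (𝓝 0) := by
    simpa [hη0] using hη.norm
  exact hc.ne' (tendsto_nhds_unique (hlim.comp hφ.tendsto_atTop) hlim0)
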